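/- arXiv:math/0611472 — 2 statements merged into one kernel-verified Lean document; each statement's English description precedes it below -/
import Mathlib

section
/- Let a₁, a₂, a₃, u₁, u₂, u₃ ∈ ℂ, let Z₁ be the skew-symmetric matrix [[0, a₃/2, −a₂/2], [−a₃/2, 0, a₁/2], [a₂/2, −a₁/2, 0]], let Z₂ = Z₁² + uᵀu where (uᵀu)ᵢⱼ = uᵢuⱼ, and let A = [[Z₁, I], [Z₂, Z₁]] in 3×3 blocks. Then A³ = 0 if and only if a₁² + a₂² + a₃² = 0 and uᵀu = −4Z₁². -/
open Matrix

noncomputable section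

/-- Assemble four 3×3 blocks into a 6×6 matrix. -/
def blk (A B C D : Matrix (Fin 3) (Fin 3) ℂ) : Matrix (Fin 6) (Fin 6) ℂ :=
  Matrix.reindex finSumFinEquiv finSumFinEquiv (Matrix.fromBlocks A B C D)

/-- The skew-symmetric matrix built from (a₁, a₂, a₃). -/
def Zone (a₁ a₂ a₃ : ℂ) : Matrix (Fin 3) (Fin 3) ℂ :=
  !![0, a₃ / 2, -a₂ / 2; -a₃ / 2, 0, a₁ / 2; a₂ / 2, -a₁ / 2, 0]

/-- Z₂ = Z₁² + uᵀu, where (uᵀu)ᵢⱼ = uᵢuⱼ. -/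
def Ztwo (a₁ a₂ a₃ u₁ u₂ u₃ : ℂ) : Matrix (Fin 3) (Fin 3) ℂ :=
  (Zone a₁ a₂ a₃) ^ 2 + vecMulVec ![u₁, u₂, u₃] ![u₁, u₂, u₃]

/-- The slice matrix A = [[Z₁, I], [Z₂, Z₁]]. -/
def Amat (a₁ a₂ a₃ u₁ u₂ u₃ : ℂ) : Matrix (Fin 6) (Fin 6) ℂ :=
  blk (Zone a₁ a₂ a₃) 1 (Ztwo a₁ a₂ a₃ u₁ u₂ u₃) (Zone a₁ a₂ a₃)

set_option maxHeartbeats 2000000 in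
lemma Zone_cube (a₁ a₂ a₃ : ℂ) :
    (Zone a₁ a₂ a₃) ^ 3 = (-(a₁ ^ 2 + a₂ ^ 2 + a₃ ^ 2) / 4) • Zone a₁ a₂ a₃ := by
  rw [pow_succ, pow_succ, pow_one, Zone, Matrix.mul_fin_three, Matrix.mul_fin_three]
  ext i j
  fin_cases i <;> fin_cases j <;> simp <;> ring

lemma Amat_cube (a₁ a₂ a₃ u₁ u₂ u₃ : ℂ) :
    (Amat a₁ a₂ a₃ u₁ u₂ u₃) ^ 3 = 0 ↔
      ((Zone a₁ a₂ a₃)^2 + Ztwo a₁ a₂ a₃ u₁ u₂ u₃) * Zone a₁ a₂ a₃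
          + 2 * (Zone a₁ a₂ a₃ * Ztwo a₁ a₂ a₃ u₁ u₂ u₃) = 0 ∧
      3 * (Zone a₁ a₂ a₃)^2 + Ztwo a₁ a₂ a₃ u₁ u₂ u₃ = 0 ∧
      (Ztwo a₁ a₂ a₃ u₁ u₂ u₃ * Zone a₁ a₂ a₃ + Zone a₁ a₂ a₃ * Ztwo a₁ a₂ a₃ u₁ u₂ u₃)
          * Zone a₁ a₂ a₃
        + (Ztwo a₁ a₂ a₃ u₁ u₂ u₃ + (Zone a₁ a₂ a₃)^2) * Ztwo a₁ a₂ a₃ u₁ u₂ u₃ = 0 ∧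
      (Ztwo a₁ a₂ a₃ u₁ u₂ u₃ * Zone a₁ a₂ a₃ + Zone a₁ a₂ a₃ * Ztwo a₁ a₂ a₃ u₁ u₂ u₃)
        + (Ztwo a₁ a₂ a₃ u₁ u₂ u₃ + (Zone a₁ a₂ a₃)^2) * Zone a₁ a₂ a₃ = 0 := by
  set Z := Zone a₁ a₂ a₃
  set W := Ztwo a₁ a₂ a₃ u₁ u₂ u₃
  have h : Amat a₁ a₂ a₃ u₁ u₂ u₃
      = reindexAlgEquiv ℂ ℂ finSumFinEquiv (fromBlocks Z 1 W Z) := rfl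
  rw [h, ← map_pow, EmbeddingLike.map_eq_zero_iff]
  have hp : (fromBlocks Z 1 W Z) ^ 3 =
      fromBlocks ((Z^2 + W) * Z + 2 * (Z * W)) (3 * Z^2 + W)
        ((W * Z + Z * W) * Z + (W + Z^2) * W) ((W * Z + Z * W) + (W + Z^2) * Z) := by
    have h2 : (fromBlocks Z 1 W Z) ^ 2 = fromBlocks (Z^2 + W) (2*Z) (W*Z + Z*W) (W + Z^2) := by
      rw [sq, fromBlocks_multiply]
      exact fromBlocks_inj.mpr ⟨by noncomm_ring, by noncomm_ring, by noncomm_ring,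
        by noncomm_ring⟩
    rw [pow_succ, h2, fromBlocks_multiply]
    exact fromBlocks_inj.mpr ⟨by noncomm_ring, by noncomm_ring, by noncomm_ring,
      by noncomm_ring⟩
  rw [hp, ← fromBlocks_zero, fromBlocks_inj]

theorem stmt12 (a₁ a₂ a₃ u₁ u₂ u₃ : ℂ) :
    (Amat a₁ a₂ a₃ u₁ u₂ u₃) ^ 3 = 0 ↔
      a₁ ^ 2 + a₂ ^ 2 + a₃ ^ 2 = 0 ∧
      vecMulVec ![u₁, u₂, u₃] ![u₁, u₂, u₃] = (-4 : ℂ) • (Zone a₁ a₂ a₃) ^ 2 := by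
  have two_eq : (2 : Matrix (Fin 3) (Fin 3) ℂ) = (2 : ℂ) • 1 := by
    rw [two_smul]; norm_num
  have three_eq : (3 : Matrix (Fin 3) (Fin 3) ℂ) = (3 : ℂ) • 1 := by
    rw [show (3 : ℂ) = 2 + 1 by norm_num, add_smul, two_smul, one_smul]
    norm_num
  rw [Amat_cube]
  set Z := Zone a₁ a₂ a₃ with hZ
  set P := vecMulVec ![u₁, u₂, u₃] ![u₁, u₂, u₃] with hP
  have hW : Ztwo a₁ a₂ a₃ u₁ u₂ u₃ = Z ^ 2 + P := rfl
  rw [hW]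
  constructor
  · rintro ⟨h1, h2, -, -⟩
    have hPval : P = (-4 : ℂ) • Z ^ 2 := by
      rw [three_eq] at h2
      have h2' : P = -((3 : ℂ) • (1 : Matrix (Fin 3) (Fin 3) ℂ) * Z ^ 2) - Z ^ 2 := by
        rw [← sub_eq_zero] at h2 ⊢
        rw [← h2]; noncomm_ring
      rw [h2', smul_mul_assoc, one_mul]
      module
    have hZ3 : Z ^ 3 = 0 := by
      rw [hPval, two_eq] at h1
      have h8 : (-8 : ℂ) • Z ^ 3 = 0 := by
        rw [← h1]
        simp only [smul_mul_assoc, mul_smul_comm, one_mul, add_mul, mul_add, smul_add,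
          smul_smul, ← pow_succ, ← pow_succ']
        module
      have := congrArg (fun M => (-8 : ℂ)⁻¹ • M) h8
      simpa [smul_smul] using this
    have hsZ : (a₁ ^ 2 + a₂ ^ 2 + a₃ ^ 2) • Z = 0 := by
      have hc := Zone_cube a₁ a₂ a₃
      rw [← hZ, hZ3] at hc
      have h4 := congrArg (fun M => (-4 : ℂ) • M) hc.symm
      simp only [smul_smul, smul_zero] at h4
      have he : (-4 : ℂ) * (-(a₁ ^ 2 + a₂ ^ 2 + a₃ ^ 2) / 4) = a₁ ^ 2 + a₂ ^ 2 + a₃ ^ 2 := by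
        ring
      rwa [he] at h4
    set s := a₁ ^ 2 + a₂ ^ 2 + a₃ ^ 2 with hs
    have e1 : s * (a₃ / 2) = 0 := by
      have := congrFun (congrFun hsZ 0) 1
      simpa [hZ, Zone] using this
    have e2 : s * (a₁ / 2) = 0 := by
      have := congrFun (congrFun hsZ 1) 2
      simpa [hZ, Zone] using this
    have e3 : s * (a₂ / 2) = 0 := by
      have := congrFun (congrFun hsZ 2) 0
      simpa [hZ, Zone] using this
    have hs0 : s = 0 := by
      have hsq : s * s = 0 := by
        have he : s * s = 2 * a₁ * (s * (a₁ / 2)) + 2 * a₂ * (s * (a₂ / 2))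
            + 2 * a₃ * (s * (a₃ / 2)) := by rw [hs]; ring
        rw [he, e1, e2, e3]; ring
      exact mul_self_eq_zero.mp hsq
    exact ⟨hs0, hPval⟩
  · rintro ⟨hs, hPval⟩
    have hZ3 : Z ^ 3 = 0 := by
      rw [hZ, Zone_cube, ← hZ, hs]
      simp
    have hZ4 : Z ^ 4 = 0 := by
      rw [pow_succ, hZ3, zero_mul]
    rw [hPval, two_eq, three_eq]
    refine ⟨?_, ?_, ?_, ?_⟩ <;>
      · simp only [smul_mul_assoc, mul_smul_comm, one_mul, add_mul, mul_add, smul_add,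
          smul_smul, ← pow_succ, ← pow_succ', ← pow_add]
        simp [hZ3, hZ4]
        try module
end
end

section
/- For every t ∈ ℂ, the matrix z_t = [[tB, I], [−3t²B², tB]] (in 3×3 blocks), where B = [[0, i, 1], [−i, 0, 0], [−1, 0, 0]], lies in 𝔰𝔭₆ and satisfies z_t³ = 0; moreover for t ≠ 0 the kernel of z_t is the two-dimensional subspace of ℂ⁶ spanned by e₁ + i t e₅ + t e₆ and e₂ − i e₃, where e₁, …, e₆ is the standard basis of ℂ⁶ and i is the imaginary unit. -/
open Matrix

noncomputable section

/-- The standard symplectic form matrix J = [[0, I], [−I, 0]]. -/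
def Jmat : Matrix (Fin 6) (Fin 6) ℂ := blk 0 1 (-1) 0

/-- The symplectic Lie algebra 𝔰𝔭₆ = {A | Aᵀ J + J A = 0}. -/
def sp6 : Set (Matrix (Fin 6) (Fin 6) ℂ) := {A | Aᵀ * Jmat + Jmat * A = 0}


/-- The matrix B of the paper. -/
def Bmat : Matrix (Fin 3) (Fin 3) ℂ :=
  !![0, Complex.I, 1; -Complex.I, 0, 0; -1, 0, 0]

/-- The family z_t = [[tB, I], [−3t²B², tB]]. -/
def zt (t : ℂ) : Matrix (Fin 6) (Fin 6) ℂ :=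
  blk (t • Bmat) 1 ((-3 * t ^ 2) • (Bmat * Bmat)) (t • Bmat)

@[simp] lemma fse0 : (finSumFinEquiv.symm (0 : Fin 6) : Fin 3 ⊕ Fin 3) = Sum.inl 0 := by decide
@[simp] lemma fse1 : (finSumFinEquiv.symm (1 : Fin 6) : Fin 3 ⊕ Fin 3) = Sum.inl 1 := by decide
@[simp] lemma fse2 : (finSumFinEquiv.symm (2 : Fin 6) : Fin 3 ⊕ Fin 3) = Sum.inl 2 := by decide
@[simp] lemma fse3 : (finSumFinEquiv.symm (3 : Fin 6) : Fin 3 ⊕ Fin 3) = Sum.inr 0 := by decide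
@[simp] lemma fse4 : (finSumFinEquiv.symm (4 : Fin 6) : Fin 3 ⊕ Fin 3) = Sum.inr 1 := by decide
@[simp] lemma fse5 : (finSumFinEquiv.symm (5 : Fin 6) : Fin 3 ⊕ Fin 3) = Sum.inr 2 := by decide
@[simp] lemma vec6_5 (a b c d e f : ℂ) : ![a,b,c,d,e,f] 5 = f := rfl
@[simp] lemma vec6_5' (a : ℂ) (u : Fin 5 → ℂ) : Matrix.vecCons a u 5 = u 4 := rfl

set_option maxHeartbeats 1000000 in
lemma zt_eq (t : ℂ) : zt t =
    !![0, Complex.I*t, t, 1, 0, 0;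
       -(Complex.I*t), 0, 0, 0, 1, 0;
       -t, 0, 0, 0, 0, 1;
       0, 0, 0, 0, Complex.I*t, t;
       0, -3*t^2, 3*Complex.I*t^2, -(Complex.I*t), 0, 0;
       0, 3*Complex.I*t^2, 3*t^2, -t, 0, 0] := by
  ext i j
  fin_cases i <;> fin_cases j <;>
    (try simp [zt, blk, Bmat, Matrix.mul_apply, Fin.sum_univ_succ, Matrix.one_apply,
      Matrix.vecHead, Matrix.vecTail]) <;>
    (try rfl) <;> (try ring_nf)

set_option maxHeartbeats 1000000 in
lemma ztT_eq (t : ℂ) : (zt t)ᵀ =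
    !![0, -(Complex.I*t), -t, 0, 0, 0;
       Complex.I*t, 0, 0, 0, -3*t^2, 3*Complex.I*t^2;
       t, 0, 0, 0, 3*Complex.I*t^2, 3*t^2;
       1, 0, 0, 0, -(Complex.I*t), -t;
       0, 1, 0, Complex.I*t, 0, 0;
       0, 0, 1, t, 0, 0] := by
  rw [zt_eq]
  ext i j
  fin_cases i <;> fin_cases j <;> rfl

set_option maxHeartbeats 1000000 in
lemma Jmat_eq : Jmat =
    !![0, 0, 0, 1, 0, 0;
       0, 0, 0, 0, 1, 0;
       0, 0, 0, 0, 0, 1;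
       -1, 0, 0, 0, 0, 0;
       0, -1, 0, 0, 0, 0;
       0, 0, -1, 0, 0, 0] := by
  ext i j
  fin_cases i <;> fin_cases j <;>
    (try simp [Jmat, blk, Matrix.one_apply, Matrix.vecHead, Matrix.vecTail]) <;> (try rfl)

set_option maxHeartbeats 1000000 in
lemma zt_sq (t : ℂ) : zt t * zt t =
    !![0, 0, 0, 0, 2*Complex.I*t, 2*t;
       0, -2*t^2, 2*Complex.I*t^2, -(2*Complex.I*t), 0, 0;
       0, 2*Complex.I*t^2, 2*t^2, -(2*t), 0, 0;
       0, 0, 0, 0, 0, 0;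
       0, 0, 0, 0, -2*t^2, 2*Complex.I*t^2;
       0, 0, 0, 0, 2*Complex.I*t^2, 2*t^2] := by
  rw [zt_eq]
  ext i j
  fin_cases i <;> fin_cases j <;>
    (try simp [Matrix.mul_apply, Fin.sum_univ_six, Matrix.vecHead, Matrix.vecTail]) <;>
    (try ring_nf) <;> (try simp [Complex.I_sq]) <;> (try ring)

set_option maxHeartbeats 1000000 in
lemma zt_cube (t : ℂ) : (zt t) ^ 3 = 0 := by
  have h : (zt t) ^ 3 = (zt t * zt t) * zt t := by rw [pow_succ, pow_two]
  rw [h, zt_sq, zt_eq]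
  ext i j
  fin_cases i <;> fin_cases j <;>
    (try simp [Matrix.mul_apply, Fin.sum_univ_six, Matrix.vecHead, Matrix.vecTail]) <;>
    (try ring_nf) <;> (try simp [Complex.I_sq]) <;> (try ring)

set_option maxHeartbeats 1000000 in
lemma ztTJ (t : ℂ) : (zt t)ᵀ * Jmat =
    !![0, 0, 0, 0, -(Complex.I*t), -t;
       0, 3*t^2, -3*Complex.I*t^2, Complex.I*t, 0, 0;
       0, -3*Complex.I*t^2, -3*t^2, t, 0, 0;
       0, Complex.I*t, t, 1, 0, 0;
       -(Complex.I*t), 0, 0, 0, 1, 0;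
       -t, 0, 0, 0, 0, 1] := by
  rw [ztT_eq, Jmat_eq]
  ext i j
  fin_cases i <;> fin_cases j <;>
    (try simp [Matrix.mul_apply, Fin.sum_univ_six, Matrix.vecHead, Matrix.vecTail]) <;>
    (try ring_nf) <;> (try simp [Complex.I_sq]) <;> (try ring)

set_option maxHeartbeats 1000000 in
lemma Jzt (t : ℂ) : Jmat * zt t =
    !![0, 0, 0, 0, Complex.I*t, t;
       0, -3*t^2, 3*Complex.I*t^2, -(Complex.I*t), 0, 0;
       0, 3*Complex.I*t^2, 3*t^2, -t, 0, 0;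
       0, -(Complex.I*t), -t, -1, 0, 0;
       Complex.I*t, 0, 0, 0, -1, 0;
       t, 0, 0, 0, 0, -1] := by
  rw [zt_eq, Jmat_eq]
  ext i j
  fin_cases i <;> fin_cases j <;>
    (try simp [Matrix.mul_apply, Fin.sum_univ_six, Matrix.vecHead, Matrix.vecTail]) <;>
    (try ring_nf) <;> (try simp [Complex.I_sq]) <;> (try ring)

set_option maxHeartbeats 1000000 in
lemma zt_sp6 (t : ℂ) : zt t ∈ sp6 := by
  show (zt t)ᵀ * Jmat + Jmat * zt t = 0
  rw [ztTJ, Jzt]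
  ext i j
  fin_cases i <;> fin_cases j <;>
    (try simp [Matrix.vecHead, Matrix.vecTail]) <;> (try ring)

lemma range_pair {α : Type*} (a b : α) : Set.range ![a, b] = {a, b} := by
  ext x
  simp [Fin.exists_fin_two]
  tauto

theorem stmt18 (t : ℂ) :
    zt t ∈ sp6 ∧ (zt t) ^ 3 = 0 ∧
    (t ≠ 0 →
      LinearMap.ker (Matrix.mulVecLin (zt t)) =
        Submodule.span ℂ {![1, 0, 0, 0, Complex.I * t, t], ![0, 1, -Complex.I, 0, 0, 0]} ∧
      Module.finrank ℂ
        (Submodule.span ℂ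
          ({![1, 0, 0, 0, Complex.I * t, t], ![0, 1, -Complex.I, 0, 0, 0]} :
            Set (Fin 6 → ℂ))) = 2) := by
  refine ⟨zt_sp6 t, zt_cube t, fun ht => ⟨?_, ?_⟩⟩
  · apply le_antisymm
    · intro v hv
      have hv' : zt t *ᵥ v = 0 := hv
      rw [zt_eq] at hv'
      have h0 := congrFun hv' 0
      have h1 := congrFun hv' 1
      have h2 := congrFun hv' 2
      have h4 := congrFun hv' 4
      simp [Matrix.mulVec, dotProduct, Fin.sum_univ_six] at h0 h1 h2 h4
      have ht2 : (t : ℂ)^2 ≠ 0 := pow_ne_zero _ ht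
      have key2 : v 2 + Complex.I * v 1 = 0 := by
        have key : t^2 * (v 2 + Complex.I * v 1) = 0 := by
          linear_combination (norm := (ring_nf; simp [Complex.I_sq]; try ring))
            (-Complex.I/4) * h4 + (t/4) * h0
        exact (mul_eq_zero.mp key).resolve_left ht2
      have e3 : v 3 = 0 := by linear_combination h0 - t * key2
      have e4 : v 4 = Complex.I * t * v 0 := by linear_combination h1
      have e5 : v 5 = t * v 0 := by linear_combination h2
      rw [Submodule.mem_span_pair]
      refine ⟨v 0, v 1, ?_⟩
      funext i
      fin_cases i <;>
        (try simp [Matrix.vecHead, Matrix.vecTail])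
      · linear_combination -key2
      · linear_combination -e3
      · linear_combination -e4
      · linear_combination -e5
    · rw [Submodule.span_le]
      intro x hx
      simp only [Set.mem_insert_iff, Set.mem_singleton_iff] at hx
      rcases hx with rfl | rfl <;>
      · simp only [SetLike.mem_coe, LinearMap.mem_ker, Matrix.mulVecLin_apply]
        rw [zt_eq]
        funext i
        fin_cases i <;>
          (try simp [Matrix.mulVec, dotProduct, Fin.sum_univ_six,
            Matrix.vecHead, Matrix.vecTail]) <;>
          (try ring_nf) <;> (try simp [Complex.I_sq]) <;> (try ring)
  · have hli : LinearIndependent ℂ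
        ![![1, 0, 0, 0, Complex.I * t, t], ![(0:ℂ), 1, -Complex.I, 0, 0, 0]] := by
      rw [LinearIndependent.pair_iff]
      intro s r h
      have h0 := congrFun h 0
      have h1 := congrFun h 1
      simp at h0 h1
      exact ⟨h0, h1⟩
    rw [← range_pair, finrank_span_eq_card hli]
    simp
end
end
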